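/- arXiv:1211.4117 — 4 statements merged into one kernel-verified Lean document; each statement's English description precedes it below -/
import Mathlib

section
/- Let 𝒜 be a commutative ℝ-algebra, res : 𝒜 → ℝ linear, and D(x,m,y,n) := res((n·x − m·y)²)/(2mn(m+n)) for x,y ∈ 𝒜, m,n > 0. Then for x₁,x₂,x₃ ∈ 𝒜 and m₁,m₂,m₃ > 0: (m₁+m₂+m₃)·D(x₁+x₂, m₁+m₂, x₃, m₃) + m₃·D(x₁,m₁,x₂,m₂) = (m₁+m₃)·D(x₁,m₁,x₃,m₃) + (m₂+m₃)·D(x₂,m₂,x₃,m₃). -/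
noncomputable def D {A : Type*} [CommRing A] [Algebra ℝ A] (res : A →ₗ[ℝ] ℝ)
    (x : A) (m : ℝ) (y : A) (n : ℝ) : ℝ :=
  res ((n • x - m • y) ^ 2) / (2 * m * n * (m + n))

lemma res_sq_expand {A : Type*} [CommRing A] [Algebra ℝ A] (res : A →ₗ[ℝ] ℝ)
    (x y : A) (m n : ℝ) :
    res ((n • x - m • y) ^ 2)
      = n ^ 2 * res (x * x) - 2 * m * n * res (x * y) + m ^ 2 * res (y * y) := by
  have : (n • x - m • y) ^ 2
      = (n ^ 2) • (x * x) - (2 * m * n) • (x * y) + (m ^ 2) • (y * y) := by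
    simp only [pow_two, sub_mul, mul_sub, smul_mul_assoc, mul_smul_comm, smul_smul,
      mul_comm y x]
    module
  rw [this]
  simp [mul_comm]

theorem stmt6 {A : Type*} [CommRing A] [Algebra ℝ A] (res : A →ₗ[ℝ] ℝ)
    (x₁ x₂ x₃ : A) (m₁ m₂ m₃ : ℝ) (h₁ : 0 < m₁) (h₂ : 0 < m₂) (h₃ : 0 < m₃) :
    (m₁ + m₂ + m₃) * D res (x₁ + x₂) (m₁ + m₂) x₃ m₃ + m₃ * D res x₁ m₁ x₂ m₂
      = (m₁ + m₃) * D res x₁ m₁ x₃ m₃ + (m₂ + m₃) * D res x₂ m₂ x₃ m₃ := by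
  have e12 := res_sq_expand res x₁ x₂ m₁ m₂
  have e13 := res_sq_expand res x₁ x₃ m₁ m₃
  have e23 := res_sq_expand res x₂ x₃ m₂ m₃
  have e123 := res_sq_expand res (x₁ + x₂) x₃ (m₁ + m₂) m₃
  have h12 : res ((x₁ + x₂) * (x₁ + x₂))
      = res (x₁ * x₁) + 2 * res (x₁ * x₂) + res (x₂ * x₂) := by
    have : (x₁ + x₂) * (x₁ + x₂) = x₁ * x₁ + (2:ℝ) • (x₁ * x₂) + x₂ * x₂ := by
      simp only [add_mul, mul_add, mul_comm x₂ x₁]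
      module
    rw [this]; simp
  have h3 : res ((x₁ + x₂) * x₃) = res (x₁ * x₃) + res (x₂ * x₃) := by
    rw [add_mul]; simp
  unfold D
  rw [e12, e13, e23, e123, h12, h3]
  field_simp
  ring
end

section
/- Let 𝒜 be a commutative ℝ-algebra, res : 𝒜 → ℝ linear, and D(x,m,y,n) := res((n·x − m·y)²)/(2mn(m+n)) for x,y ∈ 𝒜, m,n > 0. Let n ≥ 3, x : Fin n → 𝒜 and m : Fin n → ℝ with all mᵢ > 0. Writing Dᵉ(i,j) := D(m_j·x_i, m_i·m_j, m_i·x_j, m_i·m_j), one has: Σ_{1≤i<j≤n} Dᵉ(i,j) = Σ_{j=2}^{n-1} D(m_{j+1}·(x₁+x₂), (m₁+m₂)m_{j+1}, (m₁+m₂)·x_{j+1}, (m₁+m₂)m_{j+1}) + Σ_{3≤i<j≤n} Dᵉ(i,j) + ((m₁+⋯+m_n)/2)·D(x₁,m₁,x₂,m₂). -/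
lemma res_expand {A : Type*} [CommRing A] [Algebra ℝ A] (res : A →ₗ[ℝ] ℝ) (u v : A) (s t : ℝ) :
    res ((s • u - t • v)^2) = s^2 * res (u*u) - 2*s*t * res (u*v) + t^2 * res (v*v) := by
  have h : (s • u - t • v)^2 = (s^2) • (u*u) - (2*s*t) • (u*v) + (t^2) • (v*v) := by
    rw [sq, sub_mul, mul_sub, mul_sub, smul_mul_smul_comm, smul_mul_smul_comm,
      smul_mul_smul_comm, smul_mul_smul_comm, mul_comm v u]
    module
  rw [h, map_add, map_sub, map_smul, map_smul, map_smul]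
  simp [smul_eq_mul]

lemma key {A : Type*} [CommRing A] [Algebra ℝ A] (res : A →ₗ[ℝ] ℝ) (a b c : A) (p q r : ℝ)
    (hp : 0 < p) (hq : 0 < q) (hr : 0 < r) :
    D res (r • a) (p*r) (p • c) (p*r) + D res (r • b) (q*r) (q • c) (q*r)
    = D res (r • (a+b)) ((p+q)*r) ((p+q) • c) ((p+q)*r) + (r/2) * D res a p b q := by
  unfold D
  rw [smul_smul, smul_smul, smul_smul, smul_smul, smul_smul, smul_smul]
  rw [res_expand, res_expand, res_expand, res_expand]
  have e1 : ((a+b)*(a+b)) = a*a + a*b + (a*b + b*b) := by ring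
  have e2 : ((a+b)*c) = a*c + b*c := by ring
  rw [e1, e2, map_add, map_add, map_add, map_add]
  have h1 : p ≠ 0 := hp.ne'
  have h2 : q ≠ 0 := hq.ne'
  have h3 : r ≠ 0 := hr.ne'
  have h4 : p + q ≠ 0 := by positivity
  field_simp
  ring

lemma key01 {A : Type*} [CommRing A] [Algebra ℝ A] (res : A →ₗ[ℝ] ℝ) (a b : A) (p q : ℝ)
    (hp : 0 < p) (hq : 0 < q) :
    D res (q • a) (p*q) (p • b) (p*q) = ((p+q)/2) * D res a p b q := by
  unfold D
  rw [smul_smul, smul_smul]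
  rw [res_expand, res_expand]
  have h1 : p ≠ 0 := hp.ne'
  have h2 : q ≠ 0 := hq.ne'
  have h4 : p + q ≠ 0 := by positivity
  field_simp
  ring

theorem stmt7 {A : Type*} [CommRing A] [Algebra ℝ A] (res : A →ₗ[ℝ] ℝ)
    (n : ℕ) (hn : 3 ≤ n) (x : Fin n → A) (m : Fin n → ℝ) (hm : ∀ i, 0 < m i)
    (h0 : (0 : ℕ) < n) (h1 : (1 : ℕ) < n) :
    (∑ i : Fin n, ∑ j : Fin n, if i < j then
        D res (m j • x i) (m i * m j) (m i • x j) (m i * m j) else 0)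
    = (∑ j : Fin n, if 2 ≤ (j : ℕ) then
          D res (m j • (x ⟨0, h0⟩ + x ⟨1, h1⟩)) ((m ⟨0, h0⟩ + m ⟨1, h1⟩) * m j)
                ((m ⟨0, h0⟩ + m ⟨1, h1⟩) • x j) ((m ⟨0, h0⟩ + m ⟨1, h1⟩) * m j) else 0)
      + (∑ i : Fin n, ∑ j : Fin n, if 2 ≤ (i : ℕ) ∧ i < j then
          D res (m j • x i) (m i * m j) (m i • x j) (m i * m j) else 0)
      + ((∑ i : Fin n, m i) / 2) * D res (x ⟨0, h0⟩) (m ⟨0, h0⟩) (x ⟨1, h1⟩) (m ⟨1, h1⟩) := by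
  set i0 : Fin n := ⟨0, h0⟩ with hi0
  set i1 : Fin n := ⟨1, h1⟩ with hi1
  set e : Fin n → Fin n → ℝ := fun i j =>
    D res (m j • x i) (m i * m j) (m i • x j) (m i * m j) with he
  set d : ℝ := D res (x i0) (m i0) (x i1) (m i1) with hd
  -- split the LHS
  have split : ∀ i j : Fin n, (if i < j then e i j else 0)
      = (if 2 ≤ (i:ℕ) ∧ i < j then e i j else 0)
        + ((if (i:ℕ) = 0 ∧ i < j then e i j else 0)
          + ((if (i:ℕ) = 1 ∧ i < j then e i j else 0))) := by
    intro i j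
    simp only [Fin.lt_def]
    split_ifs <;> first | ring1 | (exfalso; omega)
  have hS0 : (∑ i : Fin n, ∑ j : Fin n, if (i:ℕ) = 0 ∧ i < j then e i j else 0)
      = ∑ j : Fin n, if i0 < j then e i0 j else 0 := by
    rw [Finset.sum_eq_single i0]
    · apply Finset.sum_congr rfl; intro j _
      simp [hi0]
    · intro b _ hb
      apply Finset.sum_eq_zero; intro j _
      rw [if_neg]; rintro ⟨hb0, -⟩
      exact hb (Fin.ext (by simpa [hi0] using hb0))
    · intro h; exact absurd (Finset.mem_univ i0) h
  have hS1 : (∑ i : Fin n, ∑ j : Fin n, if (i:ℕ) = 1 ∧ i < j then e i j else 0)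
      = ∑ j : Fin n, if i1 < j then e i1 j else 0 := by
    rw [Finset.sum_eq_single i1]
    · apply Finset.sum_congr rfl; intro j _
      simp [hi1]
    · intro b _ hb
      apply Finset.sum_eq_zero; intro j _
      rw [if_neg]; rintro ⟨hb0, -⟩
      exact hb (Fin.ext (by simpa [hi1] using hb0))
    · intro h; exact absurd (Finset.mem_univ i1) h
  have hrow0 : (∑ j : Fin n, if i0 < j then e i0 j else 0)
      = (∑ j : Fin n, if 2 ≤ (j:ℕ) then e i0 j else 0) + e i0 i1 := by
    have step : ∀ j : Fin n, (if i0 < j then e i0 j else 0)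
        = (if 2 ≤ (j:ℕ) then e i0 j else 0) + (if (j:ℕ) = 1 then e i0 j else 0) := by
      intro j
      have hv0 : (i0:ℕ) = 0 := rfl
      simp only [Fin.lt_def, hv0]
      split_ifs <;> first | ring1 | (exfalso; omega)
    rw [Finset.sum_congr rfl (fun j _ => step j), Finset.sum_add_distrib]
    congr 1
    rw [Finset.sum_eq_single i1]
    · simp [hi1]
    · intro b _ hb
      rw [if_neg]; intro hb1
      exact hb (Fin.ext (by simpa [hi1] using hb1))
    · intro h; exact absurd (Finset.mem_univ i1) h
  have hrow1 : (∑ j : Fin n, if i1 < j then e i1 j else 0)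
      = ∑ j : Fin n, if 2 ≤ (j:ℕ) then e i1 j else 0 := by
    apply Finset.sum_congr rfl; intro j _
    have hv1 : (i1:ℕ) = 1 := rfl
    have : (i1 < j) ↔ 2 ≤ (j:ℕ) := by rw [Fin.lt_def, hv1]; omega
    rw [if_congr this rfl rfl]
  have hmsum : (∑ i : Fin n, m i)
      = m i0 + m i1 + ∑ j : Fin n, (if 2 ≤ (j:ℕ) then m j else 0) := by
    have step : ∀ j : Fin n, m j = (if (j:ℕ) = 0 then m j else 0)
        + (if (j:ℕ) = 1 then m j else 0) + (if 2 ≤ (j:ℕ) then m j else 0) := by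
      intro j
      split_ifs <;> first | ring1 | (exfalso; omega)
    rw [Finset.sum_congr rfl (fun j _ => step j), Finset.sum_add_distrib,
      Finset.sum_add_distrib]
    congr 2
    · rw [Finset.sum_eq_single i0]
      · simp [hi0]
      · intro b _ hb
        rw [if_neg]; intro hb0
        exact hb (Fin.ext (by simpa [hi0] using hb0))
      · intro h; exact absurd (Finset.mem_univ i0) h
    · rw [Finset.sum_eq_single i1]
      · simp [hi1]
      · intro b _ hb
        rw [if_neg]; intro hb1
        exact hb (Fin.ext (by simpa [hi1] using hb1))
      · intro h; exact absurd (Finset.mem_univ i1) h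
  -- per-column identity
  have hcol : ∀ j : Fin n, e i0 j + e i1 j
      = D res (m j • (x i0 + x i1)) ((m i0 + m i1) * m j)
          ((m i0 + m i1) • x j) ((m i0 + m i1) * m j) + (m j / 2) * d := by
    intro j
    exact key res (x i0) (x i1) (x j) (m i0) (m i1) (m j) (hm i0) (hm i1) (hm j)
  have he01 : e i0 i1 = ((m i0 + m i1)/2) * d :=
    key01 res (x i0) (x i1) (m i0) (m i1) (hm i0) (hm i1)
  calc (∑ i : Fin n, ∑ j : Fin n, if i < j then e i j else 0)
      = (∑ i : Fin n, ∑ j : Fin n, if 2 ≤ (i:ℕ) ∧ i < j then e i j else 0)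
        + ((∑ j : Fin n, if i0 < j then e i0 j else 0)
          + (∑ j : Fin n, if i1 < j then e i1 j else 0)) := by
        rw [Finset.sum_congr rfl (fun i _ => Finset.sum_congr rfl (fun j _ => split i j))]
        simp only [Finset.sum_add_distrib]
        rw [hS0, hS1]
    _ = (∑ i : Fin n, ∑ j : Fin n, if 2 ≤ (i:ℕ) ∧ i < j then e i j else 0)
        + (((∑ j : Fin n, if 2 ≤ (j:ℕ) then e i0 j + e i1 j else 0) + e i0 i1)) := by
        rw [hrow0, hrow1]
        have : (∑ j : Fin n, if 2 ≤ (j:ℕ) then e i0 j + e i1 j else 0)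
            = (∑ j : Fin n, if 2 ≤ (j:ℕ) then e i0 j else 0)
              + (∑ j : Fin n, if 2 ≤ (j:ℕ) then e i1 j else 0) := by
          rw [← Finset.sum_add_distrib]
          apply Finset.sum_congr rfl; intro j _
          split_ifs <;> ring
        rw [this]; ring
    _ = _ := by
        have hsum2 : (∑ j : Fin n, if 2 ≤ (j:ℕ) then e i0 j + e i1 j else 0)
            = (∑ j : Fin n, if 2 ≤ (j:ℕ) then
                D res (m j • (x i0 + x i1)) ((m i0 + m i1) * m j)
                  ((m i0 + m i1) • x j) ((m i0 + m i1) * m j) else 0)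
              + (∑ j : Fin n, if 2 ≤ (j:ℕ) then m j else 0) / 2 * d := by
          rw [Finset.sum_div, Finset.sum_mul, ← Finset.sum_add_distrib]
          apply Finset.sum_congr rfl; intro j _
          split_ifs with h
          · rw [hcol j]; try ring
          · simp
        rw [hsum2, he01, hmsum]
        ring
end

section
/- Let 𝒜 be a commutative ℝ-algebra, res : 𝒜 → ℝ linear, and D(x,m,y,n) := res((n·x − m·y)²)/(2mn(m+n)) for x,y ∈ 𝒜, m,n > 0. Then for x₁,x₂,x₃ ∈ 𝒜 and m₁,m₂,m₃ > 0: D(m₃·(x₁+x₂), (m₁+m₂)·m₃, (m₁+m₂)·x₃, (m₁+m₂)·m₃) + (m₃/2)·D(x₁,m₁,x₂,m₂) = D(m₃·x₁, m₁m₃, m₁·x₃, m₁m₃) + D(m₃·x₂, m₂m₃, m₂·x₃, m₂m₃). -/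
lemma res_sq {A : Type*} [CommRing A] [Algebra ℝ A] (res : A →ₗ[ℝ] ℝ)
    (x y : A) (m n : ℝ) :
    res ((n • x - m • y) ^ 2)
      = n ^ 2 * res (x * x) - 2 * (m * n) * res (x * y) + m ^ 2 * res (y * y) := by
  have h : (n • x - m • y) ^ 2
      = (n ^ 2) • (x * x) - (2 * (m * n)) • (x * y) + (m ^ 2) • (y * y) := by
    simp only [pow_two, sub_mul, mul_sub, smul_mul_smul_comm, mul_comm y x]
    module
  rw [h]
  simp [mul_comm]

theorem stmt8 {A : Type*} [CommRing A] [Algebra ℝ A] (res : A →ₗ[ℝ] ℝ)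
    (x₁ x₂ x₃ : A) (m₁ m₂ m₃ : ℝ) (h₁ : 0 < m₁) (h₂ : 0 < m₂) (h₃ : 0 < m₃) :
    D res (m₃ • (x₁ + x₂)) ((m₁ + m₂) * m₃) ((m₁ + m₂) • x₃) ((m₁ + m₂) * m₃)
      + (m₃ / 2) * D res x₁ m₁ x₂ m₂
    = D res (m₃ • x₁) (m₁ * m₃) (m₁ • x₃) (m₁ * m₃)
      + D res (m₃ • x₂) (m₂ * m₃) (m₂ • x₃) (m₂ * m₃) := by
  simp only [D, res_sq]
  simp only [smul_mul_smul_comm, add_mul, mul_add, map_add, map_smul, smul_eq_mul,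
    mul_comm, mul_left_comm]
  have h12 := (add_pos h₁ h₂).ne'
  field_simp
  ring
end

section
/- Let ω be a finite set with n ≥ 2 elements and μ : Finset ω → ℝ a function satisfying μ(β) = Σ_{α ⊆ β, |α| = 2} μ(α) for every β ⊆ ω with |β| ≥ 2. Then for every k with 2 ≤ k ≤ n: C(n−2, k−2) · μ(ω) = Σ_{β ⊆ ω, |β| = k} μ(β). -/
open Finset

lemma count_supersets {γ : Type*} [DecidableEq γ] (ω α : Finset γ) (hα : α ⊆ ω)
    (k : ℕ) (hk : α.card ≤ k) :
    ((ω.powersetCard k).filter (fun β => α ⊆ β)).card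
      = (ω.card - α.card).choose (k - α.card) := by
  have : ((ω \ α).powersetCard (k - α.card)).card
      = (ω.card - α.card).choose (k - α.card) := by
    rw [card_powersetCard, card_sdiff_of_subset hα]
  rw [← this]
  apply Finset.card_bij' (fun β _ => β \ α) (fun s _ => s ∪ α)
  · intro β hβ
    simp only [mem_filter, mem_powersetCard] at hβ
    obtain ⟨⟨hβω, hβk⟩, hαβ⟩ := hβ
    simp only [mem_powersetCard]
    constructor
    · exact sdiff_subset_sdiff hβω (le_refl α)
    · rw [card_sdiff_of_subset hαβ, hβk]
  · intro s hs
    simp only [mem_powersetCard] at hs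
    obtain ⟨hsω, hsc⟩ := hs
    have hdisj : Disjoint s α := disjoint_of_subset_left hsω sdiff_disjoint
    simp only [mem_filter, mem_powersetCard]
    refine ⟨⟨?_, ?_⟩, subset_union_right⟩
    · exact union_subset (hsω.trans sdiff_subset) hα
    · rw [card_union_of_disjoint hdisj, hsc, Nat.sub_add_cancel hk]
  · intro β hβ
    simp only [mem_filter, mem_powersetCard] at hβ
    exact sdiff_union_of_subset hβ.2
  · intro s hs
    simp only [mem_powersetCard] at hs
    have hdisj : Disjoint s α := disjoint_of_subset_left hs.1 sdiff_disjoint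
    exact union_sdiff_cancel_right hdisj

theorem stmt13 {γ : Type*} [DecidableEq γ] (ω : Finset γ) (n : ℕ)
    (hω : ω.card = n) (hn : 2 ≤ n) (μ : Finset γ → ℝ)
    (hμ : ∀ β ⊆ ω, 2 ≤ β.card → μ β = ∑ α ∈ β.powersetCard 2, μ α)
    (k : ℕ) (hk2 : 2 ≤ k) (hkn : k ≤ n) :
    ((n - 2).choose (k - 2) : ℝ) * μ ω = ∑ β ∈ ω.powersetCard k, μ β := by
  have step1 : ∑ β ∈ ω.powersetCard k, μ β
      = ∑ β ∈ ω.powersetCard k, ∑ α ∈ (ω.powersetCard 2).filter (fun α => α ⊆ β), μ α := by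
    apply Finset.sum_congr rfl
    intro β hβ
    rw [mem_powersetCard] at hβ
    rw [hμ β hβ.1 (hβ.2 ▸ hk2)]
    apply Finset.sum_congr _ (fun _ _ => rfl)
    ext α
    simp only [mem_powersetCard, mem_filter]
    exact ⟨fun ⟨h1, h2⟩ => ⟨⟨h1.trans hβ.1, h2⟩, h1⟩, fun ⟨⟨_, h2⟩, h3⟩ => ⟨h3, h2⟩⟩
  rw [step1]
  rw [Finset.sum_comm' (by intro α β; simp only [mem_filter]; tauto :
    ∀ β α, β ∈ ω.powersetCard k ∧ α ∈ (ω.powersetCard 2).filter (fun α => α ⊆ β) ↔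
      β ∈ (ω.powersetCard k).filter (fun β => α ⊆ β) ∧ α ∈ ω.powersetCard 2)]
  have step2 : ∀ α ∈ ω.powersetCard 2,
      ∑ _β ∈ (ω.powersetCard k).filter (fun β => α ⊆ β), μ α
        = ((n - 2).choose (k - 2) : ℝ) * μ α := by
    intro α hα
    rw [mem_powersetCard] at hα
    rw [Finset.sum_const, count_supersets ω α hα.1 k (hα.2 ▸ hk2), hα.2, hω,
      nsmul_eq_mul]
  rw [Finset.sum_congr rfl step2, ← Finset.mul_sum, ← hμ ω (le_refl ω) (hω ▸ hn)]
end
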